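/- arXiv:2512.04961 — 4 statements merged into one kernel-verified Lean document; each statement's English description precedes it below -/
import Mathlib

section
/- Let β : ℝ → ℝ satisfy hypothesis (H_β) and let m > 0. Then there exists a constant C > 0 such that ψ'(ψ⁻¹(v)) ≥ C v for every v ≥ 0; consequently g(v) := ψ'(ψ⁻¹(v)) − 1 satisfies g(v) ≥ C v − 1 for every v ≥ 0. -/
open MeasureTheory Filter Set

/-- The integro-exponential change of variables `ψ(u) = ∫₀ᵘ exp(m ∫₀ˢ β(t) dt) ds`. -/
noncomputable def psi (β : ℝ → ℝ) (m : ℝ) (u : ℝ) : ℝ :=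
  ∫ s in (0:ℝ)..u, Real.exp (m * ∫ t in (0:ℝ)..s, β t)

/-- Its derivative `ψ'(u) = exp(m ∫₀ᵘ β(t) dt)`. -/
noncomputable def psi' (β : ℝ → ℝ) (m : ℝ) (u : ℝ) : ℝ :=
  Real.exp (m * ∫ t in (0:ℝ)..u, β t)

/-- The inverse function `ψ⁻¹` of `ψ`. -/
noncomputable def psiInv (β : ℝ → ℝ) (m : ℝ) : ℝ → ℝ :=
  Function.invFun (psi β m)

/-!
Write `ψ' = exp ∘ g` with `g u = m ∫₀ᵘ β`. The sign condition makes `g` nondecreasing on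
`[0, ∞)`, so `∫₀ᵘ exp ∘ g ≤ u ψ'(u)`. Past a point `a` where `β ≥ 1` we have
`g' = m β ≥ m`, so `exp ∘ g ≤ (exp ∘ g)' / m` there and `∫ₐᵘ exp ∘ g ≤ ψ'(u) / m`. Hence
`ψ(u) ≤ (a + 1/m) ψ'(u)` for all `u ≥ 0`, and `u = ψ⁻¹(v)` gives the claim.
-/

open Real

theorem MonotoneOn.intervalIntegral_le_mul {f : ℝ → ℝ} {a b : ℝ} (hf : MonotoneOn f (Icc a b))
    (hab : a ≤ b) : ∫ s in a..b, f s ≤ (b - a) * f b := by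
  have hint : IntervalIntegrable f volume a b := (uIcc_of_le hab ▸ hf).intervalIntegrable
  calc ∫ s in a..b, f s ≤ ∫ _ in a..b, f b :=
        intervalIntegral.integral_mono_on hab hint intervalIntegrable_const
          fun s hs => hf hs (right_mem_Icc.2 hab) hs.2
    _ = (b - a) * f b := by simp

theorem MonotoneOn.mul_le_intervalIntegral {f : ℝ → ℝ} {a b : ℝ} (hf : MonotoneOn f (Icc a b))
    (hab : a ≤ b) : (b - a) * f a ≤ ∫ s in a..b, f s := by
  have hint : IntervalIntegrable f volume a b := (uIcc_of_le hab ▸ hf).intervalIntegrable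
  calc (b - a) * f a = ∫ _ in a..b, f a := by simp
    _ ≤ ∫ s in a..b, f s :=
        intervalIntegral.integral_mono_on hab intervalIntegrable_const hint
          fun s hs => hf (left_mem_Icc.2 hab) hs hs.1

section ExpIntegral

variable {g g' : ℝ → ℝ} {a c u : ℝ}

theorem integral_exp_le_div_of_le_deriv (hg : ∀ x, HasDerivAt g (g' x) x) (hc : 0 < c)
    (hg'c : ∀ x ∈ Ioo a u, c ≤ g' x) (hau : a ≤ u) :
    ∫ s in a..u, exp (g s) ≤ exp (g u) / c := by
  have hcont : Continuous fun s => exp (g s) :=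
    continuous_exp.comp (continuous_iff_continuousAt.2 fun x => (hg x).continuousAt)
  have hle := intervalIntegral.integral_le_sub_of_hasDeriv_right_of_le (φ := fun s => exp (g s))
    hau (hcont.div_const c).continuousOn (fun x _ => (((hg x).exp).div_const c).hasDerivWithinAt)
    hcont.integrableOn_Icc fun x hx => by
      rw [mul_div_assoc, le_mul_iff_one_le_right (exp_pos _), one_le_div hc]
      exact hg'c x hx
  have : 0 ≤ exp (g a) / c := by positivity
  linarith

theorem integral_exp_le_mul_exp (hg : ∀ x, HasDerivAt g (g' x) x) (hmono : MonotoneOn g (Ici 0))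
    (ha : 0 ≤ a) (hc : 0 < c) (hg'c : ∀ x, a < x → c ≤ g' x) (hu : 0 ≤ u) :
    ∫ s in (0:ℝ)..u, exp (g s) ≤ (a + c⁻¹) * exp (g u) := by
  have hexp : MonotoneOn (fun s => exp (g s)) (Ici 0) :=
    fun x hx y hy hxy => exp_le_exp.2 (hmono hx hy hxy)
  have hc' : 0 ≤ c⁻¹ * exp (g u) := by positivity
  rcases le_total u a with hua | hau
  · calc ∫ s in (0:ℝ)..u, exp (g s) ≤ (u - 0) * exp (g u) :=
          (hexp.mono Icc_subset_Ici_self).intervalIntegral_le_mul hu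
      _ ≤ (a + c⁻¹) * exp (g u) := by nlinarith [exp_pos (g u)]
  · have hint : ∀ x y, IntervalIntegrable (fun s => exp (g s)) volume x y := fun x y =>
      (continuous_exp.comp
        (continuous_iff_continuousAt.2 fun x => (hg x).continuousAt)).intervalIntegrable x y
    rw [← intervalIntegral.integral_add_adjacent_intervals (hint 0 a) (hint a u)]
    have h0a : ∫ s in (0:ℝ)..a, exp (g s) ≤ (a - 0) * exp (g a) :=
      (hexp.mono Icc_subset_Ici_self).intervalIntegral_le_mul ha
    have hgau : exp (g a) ≤ exp (g u) := hexp ha (ha.trans hau) hau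
    have hau' := integral_exp_le_div_of_le_deriv hg hc (fun x hx => hg'c x hx.1) hau
    rw [div_eq_inv_mul] at hau'
    nlinarith

end ExpIntegral

section Psi

variable {β : ℝ → ℝ} {m : ℝ}

theorem hasDerivAt_mul_integral (hβ : Continuous β) (x : ℝ) :
    HasDerivAt (fun u => m * ∫ t in (0:ℝ)..u, β t) (m * β x) x :=
  (hβ.integral_hasStrictDerivAt 0 x).hasDerivAt.const_mul m

theorem monotoneOn_mul_integral (hm : 0 ≤ m) (hβ : Continuous β) (hsign : ∀ s, 0 ≤ β s * s) :
    MonotoneOn (fun u => m * ∫ t in (0:ℝ)..u, β t) (Ici 0) :=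
  monotoneOn_of_hasDerivWithinAt_nonneg (convex_Ici 0)
    (continuous_iff_continuousAt.2 fun x => (hasDerivAt_mul_integral hβ x).continuousAt).continuousOn
    (fun x _ => (hasDerivAt_mul_integral hβ x).hasDerivWithinAt)
    fun x hx => mul_nonneg hm (nonneg_of_mul_nonneg_left (hsign x) (by simpa using hx))

theorem continuous_psi' (hβ : Continuous β) : Continuous (psi' β m) :=
  continuous_exp.comp
    (continuous_iff_continuousAt.2 fun x => (hasDerivAt_mul_integral hβ x).continuousAt)

theorem hasDerivAt_psi (hβ : Continuous β) (x : ℝ) : HasDerivAt (psi β m) (psi' β m x) x :=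
  ((continuous_psi' hβ).integral_hasStrictDerivAt 0 x).hasDerivAt

theorem continuous_psi (hβ : Continuous β) : Continuous (psi β m) :=
  continuous_iff_continuousAt.2 fun x => (hasDerivAt_psi hβ x).continuousAt

theorem psi_strictMono (hβ : Continuous β) : StrictMono (psi β m) :=
  strictMono_of_hasDerivAt_pos (hasDerivAt_psi hβ) fun _ => exp_pos _

theorem psi_zero : psi β m 0 = 0 :=
  intervalIntegral.integral_same

theorem self_le_psi (hm : 0 ≤ m) (hβ : Continuous β) (hsign : ∀ s, 0 ≤ β s * s) {u : ℝ}
    (hu : 0 ≤ u) : u ≤ psi β m u := by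
  have hmono : MonotoneOn (psi' β m) (Icc 0 u) := fun x hx y hy hxy =>
    exp_le_exp.2 (monotoneOn_mul_integral hm hβ hsign hx.1 hy.1 hxy)
  calc u = (u - 0) * psi' β m 0 := by simp [psi']
    _ ≤ psi β m u := hmono.mul_le_intervalIntegral hu

theorem psi_psiInv (hm : 0 ≤ m) (hβ : Continuous β) (hsign : ∀ s, 0 ≤ β s * s) {v : ℝ}
    (hv : 0 ≤ v) : psi β m (psiInv β m v) = v := by
  have hIVT := intermediate_value_Icc hv (continuous_psi (m := m) hβ).continuousOn
  obtain ⟨u, -, hu⟩ := hIVT ⟨by rwa [psi_zero], self_le_psi hm hβ hsign hv⟩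
  exact Function.invFun_eq ⟨u, hu⟩

theorem psiInv_nonneg (hm : 0 ≤ m) (hβ : Continuous β) (hsign : ∀ s, 0 ≤ β s * s) {v : ℝ}
    (hv : 0 ≤ v) : 0 ≤ psiInv β m v := by
  rw [← (psi_strictMono hβ).le_iff_le, psi_psiInv hm hβ hsign hv, psi_zero]
  exact hv

theorem psi_le_mul_psi' (hm : 0 < m) (hβ : Continuous β) (hsign : ∀ s, 0 ≤ β s * s)
    (htop : Tendsto β atTop atTop) : ∃ K > 0, ∀ u, 0 ≤ u → psi β m u ≤ K * psi' β m u := by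
  obtain ⟨a, ha⟩ := (htop.eventually_ge_atTop 1).exists_forall_of_atTop
  refine ⟨max a 0 + m⁻¹, by positivity, fun u hu =>
    integral_exp_le_mul_exp (hasDerivAt_mul_integral hβ) (monotoneOn_mul_integral hm.le hβ hsign)
      (le_max_right a 0) hm (fun x hx => ?_) hu⟩
  have := ha x ((le_max_left a 0).trans hx.le)
  nlinarith

end Psi

theorem stmt2_general (β : ℝ → ℝ) (m : ℝ) (hm : 0 < m)
    (hlip : LocallyLipschitz β)
    (hsign : ∀ s, 0 ≤ β s * s)
    (htop : Tendsto β atTop atTop) :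
    ∃ C > (0:ℝ),
      (∀ v, 0 ≤ v → C * v ≤ psi' β m (psiInv β m v)) ∧
      (∀ v, 0 ≤ v → C * v - 1 ≤ psi' β m (psiInv β m v) - 1) := by
  have hβ := hlip.continuous
  obtain ⟨K, hK, hbound⟩ := psi_le_mul_psi' hm hβ hsign htop
  have hlower : ∀ v, 0 ≤ v → K⁻¹ * v ≤ psi' β m (psiInv β m v) := fun v hv => by
    rw [inv_mul_le_iff₀ hK]
    simpa only [psi_psiInv hm.le hβ hsign hv] using hbound _ (psiInv_nonneg hm.le hβ hsign hv)
  exact ⟨K⁻¹, inv_pos.2 hK, hlower, fun v hv => sub_le_sub_right (hlower v hv) 1⟩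

theorem stmt2 (β : ℝ → ℝ) (m : ℝ) (hm : 0 < m)
    (hodd : ∀ s, β (-s) = -β s)
    (hlip : LocallyLipschitz β)
    (hmono : Monotone β)
    (hsign : ∀ s, 0 ≤ β s * s)
    (htop : Tendsto β atTop atTop) :
    ∃ C > (0:ℝ),
      (∀ v, 0 ≤ v → C * v ≤ psi' β m (psiInv β m v)) ∧
      (∀ v, 0 ≤ v → C * v - 1 ≤ psi' β m (psiInv β m v) - 1) :=
  stmt2_general β m hm hlip hsign htop
end

section
/- Let β : ℝ → ℝ satisfy hypothesis (H_β), let m > 0 and 0 < λ ≤ Λ. Let Ω ⊆ ℝⁿ be open, u : Ω → ℝ twice continuously differentiable, x ∈ Ω with u(x) ≥ 0, and set w = Ψ ∘ u where Ψ(u) = ∫_0^u exp(−m ∫_0^s β(t) dt) ds. Then 𝓜⁺(D²u(x)) − m Λ β(u(x)) ‖∇u(x)‖² ≤ 𝓜⁺(D²w(x)) / Ψ'(u(x)) ≤ 𝓜⁺(D²u(x)) − m λ β(u(x)) ‖∇u(x)‖², and the same two inequalities hold with 𝓜⁻ in place of 𝓜⁺. -/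
open MeasureTheory Filter Set

/-- The integro-exponential change of variables `Ψ(u) = ∫₀ᵘ exp(−m ∫₀ˢ β(t) dt) ds`. -/
noncomputable def PsiFun (β : ℝ → ℝ) (m : ℝ) (u : ℝ) : ℝ :=
  ∫ s in (0:ℝ)..u, Real.exp (-(m * ∫ t in (0:ℝ)..s, β t))

/-- Its derivative `Ψ'(u) = exp(−m ∫₀ᵘ β(t) dt)`. -/
noncomputable def PsiFun' (β : ℝ → ℝ) (m : ℝ) (u : ℝ) : ℝ :=
  Real.exp (-(m * ∫ t in (0:ℝ)..u, β t))

/-- The admissible set for the Pucci extremal operators: real symmetric matrices `A`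
with `λI ≤ A ≤ ΛI` in the Loewner (positive-semidefinite) order. -/
def pucciSet (n : ℕ) (lam Lam : ℝ) : Set (Matrix (Fin n) (Fin n) ℝ) :=
  {A | (A - lam • (1 : Matrix (Fin n) (Fin n) ℝ)).PosSemidef ∧
       (Lam • (1 : Matrix (Fin n) (Fin n) ℝ) - A).PosSemidef}

/-- Pucci maximal operator `𝓜⁺(X) = sup { tr(A X) : λI ≤ A ≤ ΛI }`. -/
noncomputable def pucciPlus (n : ℕ) (lam Lam : ℝ) (X : Matrix (Fin n) (Fin n) ℝ) : ℝ :=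
  sSup ((fun A => Matrix.trace (A * X)) '' pucciSet n lam Lam)

/-- Pucci minimal operator `𝓜⁻(X) = inf { tr(A X) : λI ≤ A ≤ ΛI }`. -/
noncomputable def pucciMinus (n : ℕ) (lam Lam : ℝ) (X : Matrix (Fin n) (Fin n) ℝ) : ℝ :=
  sInf ((fun A => Matrix.trace (A * X)) '' pucciSet n lam Lam)

/-- The Hessian matrix `D²u(x)` of a real-valued function on Euclidean space. -/
noncomputable def hess (n : ℕ) (u : EuclideanSpace ℝ (Fin n) → ℝ)
    (x : EuclideanSpace ℝ (Fin n)) : Matrix (Fin n) (Fin n) ℝ :=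
  Matrix.of fun i j =>
    fderiv ℝ (fderiv ℝ u) x (EuclideanSpace.single i 1) (EuclideanSpace.single j 1)

/-!
Since `Ψ'' = −m β Ψ'`, the chain rule gives `D²w = Ψ'(u) (D²u − s ∇u ⊗ ∇u)` with `s = m β(u)`,
and `s ≥ 0` by the sign condition on `β` (and continuity at `u = 0`). The Pucci operators are
positively homogeneous, so it remains to compare `𝓜^±(X − s ∇u ⊗ ∇u)` with `𝓜^±(X)`: for
`λI ≤ A ≤ ΛI` we have `tr(A (∇u ⊗ ∇u)) = ⟨A ∇u, ∇u⟩ ∈ [λ ‖∇u‖², Λ ‖∇u‖²]`, and adding to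
`A ↦ tr(A X)` a term confined to a fixed interval moves its supremum and infimum by an amount
in that interval.
-/

open Matrix Topology Pointwise

theorem apply_nonneg_of_forall_mul_nonneg {β : ℝ → ℝ} (hβ : Continuous β)
    (hsign : ∀ s, 0 ≤ β s * s) {s : ℝ} (hs : 0 ≤ s) : 0 ≤ β s := by
  have hpos : Ioi (0 : ℝ) ⊆ {s | 0 ≤ β s} := fun s (hs : 0 < s) =>
    nonneg_of_mul_nonneg_left (hsign s) hs
  have := (isClosed_le continuous_const hβ).closure_subset_iff.2 hpos
  rw [closure_Ioi] at this
  exact this hs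

section ChangeOfVariables

variable {β : ℝ → ℝ} {m : ℝ}

theorem hasDerivAt_PsiFun' (hβ : Continuous β) (s : ℝ) :
    HasDerivAt (PsiFun' β m) (-(m * β s) * PsiFun' β m s) s := by
  have hF : HasDerivAt (fun y => ∫ t in (0:ℝ)..y, β t) (β s) s :=
    intervalIntegral.integral_hasDerivAt_right (hβ.intervalIntegrable 0 s)
      (hβ.stronglyMeasurableAtFilter _ _) hβ.continuousAt
  show HasDerivAt (fun u => Real.exp (-(m * ∫ t in (0:ℝ)..u, β t))) _ s
  simpa [PsiFun', mul_comm] using ((hF.const_mul m).neg).exp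

theorem continuous_PsiFun' (hβ : Continuous β) : Continuous (PsiFun' β m) :=
  continuous_iff_continuousAt.2 fun s => (hasDerivAt_PsiFun' hβ s).continuousAt

theorem hasDerivAt_PsiFun (hβ : Continuous β) (s : ℝ) :
    HasDerivAt (PsiFun β m) (PsiFun' β m s) s :=
  intervalIntegral.integral_hasDerivAt_right ((continuous_PsiFun' hβ).intervalIntegrable 0 s)
    ((continuous_PsiFun' hβ).stronglyMeasurableAtFilter _ _) (continuous_PsiFun' hβ).continuousAt

end ChangeOfVariables

section Hessian

variable {n : ℕ}

theorem EuclideanSpace.norm_sq_eq_dotProduct (v : EuclideanSpace ℝ (Fin n)) :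
    ‖v‖ ^ 2 = v.ofLp ⬝ᵥ v.ofLp := by
  rw [← real_inner_self_eq_norm_sq, EuclideanSpace.inner_eq_star_dotProduct, star_trivial]

theorem gradient_apply_eq_fderiv_single (u : EuclideanSpace ℝ (Fin n) → ℝ)
    (x : EuclideanSpace ℝ (Fin n)) (i : Fin n) :
    gradient u x i = fderiv ℝ u x (EuclideanSpace.single i 1) := by
  rw [← toDual_gradient, InnerProductSpace.toDual_apply_apply,
    EuclideanSpace.inner_single_right, one_mul, conj_trivial]

theorem hess_comp {φ φ' : ℝ → ℝ} {φ'' : ℝ} {Ω : Set (EuclideanSpace ℝ (Fin n))}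
    {u : EuclideanSpace ℝ (Fin n) → ℝ} {x : EuclideanSpace ℝ (Fin n)}
    (hφ : ∀ s, HasDerivAt φ (φ' s) s) (hφ' : HasDerivAt φ' φ'' (u x))
    (hΩ : IsOpen Ω) (hu : ContDiffOn ℝ 2 u Ω) (hx : x ∈ Ω) :
    hess n (fun y => φ (u y)) x =
      φ' (u x) • hess n u x + φ'' • vecMulVec (gradient u x).ofLp (gradient u x).ofLp := by
  have hdu : ∀ y ∈ Ω, HasFDerivAt u (fderiv ℝ u y) y := fun y hy =>
    ((hu.differentiableOn (by norm_num)).differentiableAt (hΩ.mem_nhds hy)).hasFDerivAt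
  have hDw : fderiv ℝ (fun y => φ (u y)) =ᶠ[𝓝 x] fun y => φ' (u y) • fderiv ℝ u y := by
    filter_upwards [hΩ.mem_nhds hx] with y hy
    exact ((hφ (u y)).comp_hasFDerivAt y (hdu y hy)).fderiv
  have hD2u : HasFDerivAt (fderiv ℝ u) (fderiv ℝ (fderiv ℝ u) x) x :=
    (((hu.fderiv_of_isOpen hΩ (m := 1) (by norm_num)).differentiableOn one_ne_zero)
      |>.differentiableAt (hΩ.mem_nhds hx)).hasFDerivAt
  have hD2w : fderiv ℝ (fderiv ℝ fun y => φ (u y)) x =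
      φ' (u x) • fderiv ℝ (fderiv ℝ u) x + (φ'' • fderiv ℝ u x).smulRight (fderiv ℝ u x) := by
    rw [hDw.fderiv_eq]
    exact ((hφ'.comp_hasFDerivAt x (hdu x hx)).smul hD2u).fderiv
  ext i j
  simp only [hess, hD2w, gradient_apply_eq_fderiv_single, of_apply, Matrix.add_apply,
    Matrix.smul_apply, vecMulVec_apply, _root_.add_apply, _root_.smul_apply,
    ContinuousLinearMap.smulRight_apply, smul_eq_mul]
  ring

end Hessian

section ShiftedExtrema

variable {ι : Type*} {S : Set ι} {f h : ι → ℝ} {a b : ℝ}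

theorem csSup_image_add_mem_Icc (hS : S.Nonempty) (hf : BddAbove (f '' S))
    (hfh : BddAbove ((fun i => f i + h i) '' S)) (hh : ∀ i ∈ S, h i ∈ Icc a b) :
    sSup ((fun i => f i + h i) '' S) ∈ Icc (sSup (f '' S) + a) (sSup (f '' S) + b) := by
  constructor
  · rw [← le_sub_iff_add_le]
    refine csSup_le (hS.image _) ?_
    rintro _ ⟨i, hi, rfl⟩
    rw [le_sub_iff_add_le]
    exact (add_le_add_right (hh i hi).1 _).trans (le_csSup hfh ⟨i, hi, rfl⟩)
  · refine csSup_le (hS.image _) ?_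
    rintro _ ⟨i, hi, rfl⟩
    exact add_le_add (le_csSup hf ⟨i, hi, rfl⟩) (hh i hi).2

theorem csInf_image_add_mem_Icc (hS : S.Nonempty) (hf : BddBelow (f '' S))
    (hfh : BddBelow ((fun i => f i + h i) '' S)) (hh : ∀ i ∈ S, h i ∈ Icc a b) :
    sInf ((fun i => f i + h i) '' S) ∈ Icc (sInf (f '' S) + a) (sInf (f '' S) + b) := by
  constructor
  · refine le_csInf (hS.image _) ?_
    rintro _ ⟨i, hi, rfl⟩
    exact add_le_add (csInf_le hf ⟨i, hi, rfl⟩) (hh i hi).1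
  · rw [← sub_le_iff_le_add]
    refine le_csInf (hS.image _) ?_
    rintro _ ⟨i, hi, rfl⟩
    rw [sub_le_iff_le_add]
    exact (csInf_le hfh ⟨i, hi, rfl⟩).trans (add_le_add_right (hh i hi).2 _)

end ShiftedExtrema

section Pucci

variable {n : ℕ} {lam Lam : ℝ}

theorem Matrix.PosSemidef.abs_apply_le {B : Matrix (Fin n) (Fin n) ℝ} (hB : B.PosSemidef)
    (i j : Fin n) : |B i j| ≤ (B i i + B j j) / 2 := by
  have hquad : ∀ c : ℝ, 0 ≤ B i i + c * (B i j + B j i) + c ^ 2 * B j j := fun c => by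
    have h := hB.dotProduct_mulVec_nonneg (Pi.single i 1 + c • Pi.single j 1)
    simp only [star_trivial, mulVec_add, mulVec_smul, mulVec_single_one, add_dotProduct,
      smul_dotProduct, dotProduct_add, dotProduct_smul, single_dotProduct, col_apply, smul_eq_mul,
      one_mul] at h
    linarith
  have hsymm : B j i = B i j := hB.1.apply i j
  rw [abs_le]
  constructor <;> nlinarith [hquad 1, hquad (-1)]

theorem abs_apply_le_of_mem_pucciSet {A : Matrix (Fin n) (Fin n) ℝ} (hA : A ∈ pucciSet n lam Lam)
    (i j : Fin n) : |A i j| ≤ Lam - lam + |lam| := by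
  have hdiag : ∀ k, (A - lam • 1) k k ≤ Lam - lam := fun k => by
    have := hA.2.diag_nonneg (i := k)
    simp only [Matrix.sub_apply, Matrix.smul_apply, one_apply_eq, smul_eq_mul] at this ⊢
    linarith
  have hlam1 : |(lam • (1 : Matrix (Fin n) (Fin n) ℝ)) i j| ≤ |lam| := by
    by_cases hij : i = j <;> simp [one_apply, hij]
  calc |A i j| = |(A - lam • 1) i j + (lam • (1 : Matrix (Fin n) (Fin n) ℝ)) i j| := by simp
    _ ≤ |(A - lam • 1) i j| + |(lam • (1 : Matrix (Fin n) (Fin n) ℝ)) i j| := abs_add_le _ _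
    _ ≤ Lam - lam + |lam| := by
      linarith [hA.1.abs_apply_le i j, hdiag i, hdiag j, hlam1]

theorem isBounded_trace_mul_image_pucciSet (X : Matrix (Fin n) (Fin n) ℝ) :
    Bornology.IsBounded ((fun A => trace (A * X)) '' pucciSet n lam Lam) := by
  refine isBounded_iff_forall_norm_le.2 ⟨(Lam - lam + |lam|) * ∑ i, ∑ j, |X j i|, ?_⟩
  rintro _ ⟨A, hA, rfl⟩
  calc ‖trace (A * X)‖ = |∑ i, ∑ j, A i j * X j i| := by simp [trace, mul_apply]
    _ ≤ ∑ i, ∑ j, |A i j| * |X j i| := by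
      simp only [← abs_mul]
      exact (Finset.abs_sum_le_sum_abs _ _).trans
        (Finset.sum_le_sum fun i _ => Finset.abs_sum_le_sum_abs _ _)
    _ ≤ ∑ i, ∑ j, (Lam - lam + |lam|) * |X j i| := by
      gcongr with i _ j _
      exact abs_apply_le_of_mem_pucciSet hA i j
    _ = (Lam - lam + |lam|) * ∑ i, ∑ j, |X j i| := by simp only [Finset.mul_sum]

theorem pucciSet_nonempty (hle : lam ≤ Lam) : (pucciSet n lam Lam).Nonempty := by
  refine ⟨lam • 1, by simpa using PosSemidef.zero, ?_⟩
  rw [← sub_smul]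
  exact PosSemidef.one.smul (sub_nonneg.2 hle)

theorem dotProduct_mulVec_mem_Icc_of_mem_pucciSet {A : Matrix (Fin n) (Fin n) ℝ}
    (hA : A ∈ pucciSet n lam Lam) (g : Fin n → ℝ) :
    g ⬝ᵥ A *ᵥ g ∈ Icc (lam * (g ⬝ᵥ g)) (Lam * (g ⬝ᵥ g)) := by
  have h1 := hA.1.dotProduct_mulVec_nonneg g
  have h2 := hA.2.dotProduct_mulVec_nonneg g
  simp only [sub_mulVec, smul_mulVec, one_mulVec, dotProduct_sub, dotProduct_smul, smul_eq_mul,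
    star_trivial] at h1 h2
  constructor <;> linarith

theorem trace_mul_vecMulVec_self (A : Matrix (Fin n) (Fin n) ℝ) (g : Fin n → ℝ) :
    trace (A * vecMulVec g g) = g ⬝ᵥ A *ᵥ g := by
  rw [mul_vecMulVec, trace_vecMulVec, dotProduct_comm]

theorem trace_mul_sub_smul_vecMulVec (A X : Matrix (Fin n) (Fin n) ℝ) (s : ℝ) (g : Fin n → ℝ) :
    trace (A * (X - s • vecMulVec g g)) = trace (A * X) + -(s * (g ⬝ᵥ A *ᵥ g)) := by
  rw [mul_sub, trace_sub, Matrix.mul_smul, trace_smul, trace_mul_vecMulVec_self, smul_eq_mul,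
    sub_eq_add_neg]

theorem neg_mul_dotProduct_mulVec_mem_Icc_of_mem_pucciSet {A : Matrix (Fin n) (Fin n) ℝ}
    (hA : A ∈ pucciSet n lam Lam) {s : ℝ} (hs : 0 ≤ s) (g : Fin n → ℝ) :
    -(s * (g ⬝ᵥ A *ᵥ g)) ∈ Icc (-(s * Lam * (g ⬝ᵥ g))) (-(s * lam * (g ⬝ᵥ g))) := by
  obtain ⟨hlo, hhi⟩ := dotProduct_mulVec_mem_Icc_of_mem_pucciSet hA g
  constructor <;> nlinarith [mul_le_mul_of_nonneg_left hlo hs, mul_le_mul_of_nonneg_left hhi hs]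

theorem pucciPlus_sub_smul_vecMulVec_mem_Icc (hle : lam ≤ Lam) (X : Matrix (Fin n) (Fin n) ℝ)
    {s : ℝ} (hs : 0 ≤ s) (g : Fin n → ℝ) :
    pucciPlus n lam Lam (X - s • vecMulVec g g) ∈
      Icc (pucciPlus n lam Lam X - s * Lam * (g ⬝ᵥ g))
        (pucciPlus n lam Lam X - s * lam * (g ⬝ᵥ g)) := by
  simp only [pucciPlus, sub_eq_add_neg _ (s * _ * _), trace_mul_sub_smul_vecMulVec]
  refine csSup_image_add_mem_Icc (pucciSet_nonempty hle)
    (isBounded_trace_mul_image_pucciSet X).bddAbove ?_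
    (fun A hA => neg_mul_dotProduct_mulVec_mem_Icc_of_mem_pucciSet hA hs g)
  simpa only [trace_mul_sub_smul_vecMulVec] using
    (isBounded_trace_mul_image_pucciSet (X - s • vecMulVec g g)).bddAbove

theorem pucciMinus_sub_smul_vecMulVec_mem_Icc (hle : lam ≤ Lam) (X : Matrix (Fin n) (Fin n) ℝ)
    {s : ℝ} (hs : 0 ≤ s) (g : Fin n → ℝ) :
    pucciMinus n lam Lam (X - s • vecMulVec g g) ∈
      Icc (pucciMinus n lam Lam X - s * Lam * (g ⬝ᵥ g))
        (pucciMinus n lam Lam X - s * lam * (g ⬝ᵥ g)) := by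
  simp only [pucciMinus, sub_eq_add_neg _ (s * _ * _), trace_mul_sub_smul_vecMulVec]
  refine csInf_image_add_mem_Icc (pucciSet_nonempty hle)
    (isBounded_trace_mul_image_pucciSet X).bddBelow ?_
    (fun A hA => neg_mul_dotProduct_mulVec_mem_Icc_of_mem_pucciSet hA hs g)
  simpa only [trace_mul_sub_smul_vecMulVec] using
    (isBounded_trace_mul_image_pucciSet (X - s • vecMulVec g g)).bddBelow

theorem image_trace_mul_smul (S : Set (Matrix (Fin n) (Fin n) ℝ)) (c : ℝ)
    (X : Matrix (Fin n) (Fin n) ℝ) :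
    (fun A => trace (A * (c • X))) '' S = c • (fun A => trace (A * X)) '' S := by
  rw [← image_smul, image_image]
  simp only [Matrix.mul_smul, trace_smul]

theorem pucciPlus_smul {c : ℝ} (hc : 0 ≤ c) (X : Matrix (Fin n) (Fin n) ℝ) :
    pucciPlus n lam Lam (c • X) = c * pucciPlus n lam Lam X := by
  rw [pucciPlus, image_trace_mul_smul, Real.sSup_smul_of_nonneg hc, smul_eq_mul, pucciPlus]

theorem pucciMinus_smul {c : ℝ} (hc : 0 ≤ c) (X : Matrix (Fin n) (Fin n) ℝ) :
    pucciMinus n lam Lam (c • X) = c * pucciMinus n lam Lam X := by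
  rw [pucciMinus, image_trace_mul_smul, Real.sInf_smul_of_nonneg hc, smul_eq_mul, pucciMinus]

end Pucci

theorem stmt8_general (n : ℕ) (β : ℝ → ℝ) (m lam Lam : ℝ) (hm : 0 < m)
    (hle : lam ≤ Lam)
    (hlip : LocallyLipschitz β)
    (hsign : ∀ s, 0 ≤ β s * s)
    (Ω : Set (EuclideanSpace ℝ (Fin n))) (hΩ : IsOpen Ω)
    (u : EuclideanSpace ℝ (Fin n) → ℝ) (hu : ContDiffOn ℝ 2 u Ω)
    (x : EuclideanSpace ℝ (Fin n)) (hx : x ∈ Ω) (hux : 0 ≤ u x) :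
    (pucciPlus n lam Lam (hess n u x) - m * Lam * β (u x) * ‖gradient u x‖ ^ 2 ≤
        pucciPlus n lam Lam (hess n (fun y => PsiFun β m (u y)) x) / PsiFun' β m (u x) ∧
      pucciPlus n lam Lam (hess n (fun y => PsiFun β m (u y)) x) / PsiFun' β m (u x) ≤
        pucciPlus n lam Lam (hess n u x) - m * lam * β (u x) * ‖gradient u x‖ ^ 2) ∧
    (pucciMinus n lam Lam (hess n u x) - m * Lam * β (u x) * ‖gradient u x‖ ^ 2 ≤
        pucciMinus n lam Lam (hess n (fun y => PsiFun β m (u y)) x) / PsiFun' β m (u x) ∧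
      pucciMinus n lam Lam (hess n (fun y => PsiFun β m (u y)) x) / PsiFun' β m (u x) ≤
        pucciMinus n lam Lam (hess n u x) - m * lam * β (u x) * ‖gradient u x‖ ^ 2) := by
  have hβ : Continuous β := hlip.continuous
  have hs : 0 ≤ m * β (u x) := mul_nonneg hm.le (apply_nonneg_of_forall_mul_nonneg hβ hsign hux)
  have hΨ : 0 < PsiFun' β m (u x) := Real.exp_pos _
  set g := (gradient u x).ofLp
  have hhess : hess n (fun y => PsiFun β m (u y)) x =
      PsiFun' β m (u x) • (hess n u x - (m * β (u x)) • vecMulVec g g) := by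
    rw [hess_comp (hasDerivAt_PsiFun hβ) (hasDerivAt_PsiFun' hβ (u x)) hΩ hu hx]
    module
  rw [hhess, pucciPlus_smul hΨ.le, pucciMinus_smul hΨ.le, mul_div_cancel_left₀ _ hΨ.ne',
    mul_div_cancel_left₀ _ hΨ.ne', EuclideanSpace.norm_sq_eq_dotProduct]
  obtain ⟨hPlus_lo, hPlus_hi⟩ := pucciPlus_sub_smul_vecMulVec_mem_Icc hle (hess n u x) hs g
  obtain ⟨hMinus_lo, hMinus_hi⟩ := pucciMinus_sub_smul_vecMulVec_mem_Icc hle (hess n u x) hs g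
  refine ⟨⟨?_, ?_⟩, ?_, ?_⟩ <;> linarith

theorem stmt8 (n : ℕ) (β : ℝ → ℝ) (m lam Lam : ℝ) (hm : 0 < m)
    (hlam : 0 < lam) (hle : lam ≤ Lam)
    (hodd : ∀ s, β (-s) = -β s)
    (hlip : LocallyLipschitz β)
    (hmono : Monotone β)
    (hsign : ∀ s, 0 ≤ β s * s)
    (htop : Tendsto β atTop atTop)
    (Ω : Set (EuclideanSpace ℝ (Fin n))) (hΩ : IsOpen Ω)
    (u : EuclideanSpace ℝ (Fin n) → ℝ) (hu : ContDiffOn ℝ 2 u Ω)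
    (x : EuclideanSpace ℝ (Fin n)) (hx : x ∈ Ω) (hux : 0 ≤ u x) :
    (pucciPlus n lam Lam (hess n u x) - m * Lam * β (u x) * ‖gradient u x‖ ^ 2 ≤
        pucciPlus n lam Lam (hess n (fun y => PsiFun β m (u y)) x) / PsiFun' β m (u x) ∧
      pucciPlus n lam Lam (hess n (fun y => PsiFun β m (u y)) x) / PsiFun' β m (u x) ≤
        pucciPlus n lam Lam (hess n u x) - m * lam * β (u x) * ‖gradient u x‖ ^ 2) ∧
    (pucciMinus n lam Lam (hess n u x) - m * Lam * β (u x) * ‖gradient u x‖ ^ 2 ≤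
        pucciMinus n lam Lam (hess n (fun y => PsiFun β m (u y)) x) / PsiFun' β m (u x) ∧
      pucciMinus n lam Lam (hess n (fun y => PsiFun β m (u y)) x) / PsiFun' β m (u x) ≤
        pucciMinus n lam Lam (hess n u x) - m * lam * β (u x) * ‖gradient u x‖ ^ 2) :=
  stmt8_general n β m lam Lam hm hle hlip hsign Ω hΩ u hu x hx hux
end

section
/- Fix an integer k ≥ 1 and m > 0, and let Ψ(u) = ∫_0^u exp(−(m/(k+1)) t^{k+1}) dt and C_β = ∫_0^∞ exp(−(m/(k+1)) t^{k+1}) dt. For s ∈ (0,1) let t_s ≥ 0 be the unique nonnegative real number with Ψ(t_s) = (1−s) C_β. Then Ψ'(t_s) · t_s / ( s · (−ln s) ) → (k+1) · C_β as s → 0⁺, where Ψ'(t) = exp(−(m/(k+1)) t^{k+1}). -/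
open MeasureTheory Filter Set
open scoped Topology

/-- `Ψ(u) = ∫₀ᵘ exp(−(m/(k+1)) t^{k+1}) dt`, the change of variables in the model case
`β(s) = s^k`. -/
noncomputable def PsiK (k : ℕ) (m : ℝ) (u : ℝ) : ℝ :=
  ∫ t in (0:ℝ)..u, Real.exp (-(m / ((k:ℝ) + 1)) * t ^ (k + 1))

/-- `C_β = ∫₀^∞ exp(−(m/(k+1)) t^{k+1}) dt`. -/
noncomputable def CbetaK (k : ℕ) (m : ℝ) : ℝ :=
  ∫ t in Set.Ioi (0:ℝ), Real.exp (-(m / ((k:ℝ) + 1)) * t ^ (k + 1))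

/-- `Ψ'(u) = exp(−(m/(k+1)) u^{k+1})`. -/
noncomputable def PsiK' (k : ℕ) (m : ℝ) (u : ℝ) : ℝ :=
  Real.exp (-(m / ((k:ℝ) + 1)) * u ^ (k + 1))

/-!
Let `T(t) = ∫ₜ^∞ Ψ'` be the tail, so that `T(t_s) = s C_β`. By l'Hôpital's rule
`T(t) ~ Ψ'(t) / (m t^k)` as `t → ∞`, hence `-log s = -log (T(t_s) / C_β) ~ (m/(k+1)) t_s^{k+1}`,
and multiplying the two, `s (-log s) ~ Ψ'(t_s) t_s / ((k+1) C_β)`. Finally `t_s → ∞` as `s → 0⁺`,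
since `T` is positive and antitone.
-/

open Real

noncomputable def tailK (k : ℕ) (m t : ℝ) : ℝ := ∫ u in Ioi t, PsiK' k m u

noncomputable def tailRatioK (k : ℕ) (m t : ℝ) : ℝ := tailK k m t * (m * t ^ k) / PsiK' k m t

noncomputable def logTailRatioK (k : ℕ) (m t : ℝ) : ℝ :=
  -log (tailK k m t / CbetaK k m) / (m / (k + 1) * t ^ (k + 1))

variable {k : ℕ} {m : ℝ}

lemma psiK'_pos (k : ℕ) (m t : ℝ) : 0 < PsiK' k m t := exp_pos _

lemma continuous_psiK' (k : ℕ) (m : ℝ) : Continuous (PsiK' k m) := by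
  unfold PsiK'; fun_prop

lemma hasDerivAt_psiK' (t : ℝ) : HasDerivAt (PsiK' k m) (-(m * t ^ k) * PsiK' k m t) t := by
  have h := (((hasDerivAt_pow (k + 1) t).const_mul (-(m / ((k:ℝ) + 1)))).exp)
  refine h.congr_deriv ?_
  rw [Nat.add_sub_cancel, PsiK']
  push_cast
  field_simp

lemma tendsto_psiK'_atTop (hm : 0 < m) : Tendsto (PsiK' k m) atTop (𝓝 0) :=
  tendsto_exp_atBot.comp <| (tendsto_pow_atTop k.succ_ne_zero).const_mul_atTop_of_neg
    (neg_neg_of_pos (by positivity))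

lemma integrableOn_Ioi_psiK' (hm : 0 < m) (t : ℝ) : IntegrableOn (PsiK' k m) (Ioi t) := by
  refine IntegrableOn.mono_set ?_ (Ioi_subset_Ioc_union_Ioi (b := 1))
  refine (continuous_psiK' k m).integrableOn_Ioc.union ?_
  refine (exp_neg_integrableOn_Ioi 1 (by positivity : 0 < m / ((k:ℝ) + 1))).mono'
    (continuous_psiK' k m).aestronglyMeasurable ?_
  filter_upwards [ae_restrict_mem measurableSet_Ioi] with x (hx : 1 < x)
  rw [norm_of_nonneg (psiK'_pos k m x).le, PsiK', exp_le_exp, neg_mul, neg_mul, neg_le_neg_iff]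
  gcongr
  exact le_self_pow₀ hx.le k.succ_ne_zero

lemma tailK_pos (hm : 0 < m) (t : ℝ) : 0 < tailK k m t := by
  rw [tailK, setIntegral_pos_iff_support_of_nonneg_ae
    (.of_forall fun x => (psiK'_pos k m x).le) (integrableOn_Ioi_psiK' hm t)]
  simp [Function.support_eq_univ fun x => (psiK'_pos k m x).ne']

lemma cbetaK_pos (hm : 0 < m) : 0 < CbetaK k m := tailK_pos hm 0

lemma tailK_eq_cbetaK_sub_psiK (hm : 0 < m) (t : ℝ) : tailK k m t = CbetaK k m - PsiK k m t := by
  rw [show PsiK k m t = ∫ u in 0..t, PsiK' k m u from rfl,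
    ← intervalIntegral.integral_Ioi_sub_Ioi' (integrableOn_Ioi_psiK' hm 0)
      (integrableOn_Ioi_psiK' hm t)]
  exact (sub_sub_cancel _ _).symm

lemma antitone_tailK (hm : 0 < m) : Antitone (tailK k m) := fun t₁ _ h =>
  setIntegral_mono_set (integrableOn_Ioi_psiK' hm t₁)
    (.of_forall fun x => (psiK'_pos k m x).le) (Ioi_subset_Ioi h).eventuallyLE

lemma tendsto_tailK_atTop (hm : 0 < m) : Tendsto (tailK k m) atTop (𝓝 0) := by
  rw [funext (tailK_eq_cbetaK_sub_psiK hm), ← sub_self (CbetaK k m)]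
  exact tendsto_const_nhds.sub
    (intervalIntegral_tendsto_integral_Ioi 0 (integrableOn_Ioi_psiK' hm 0) tendsto_id)

lemma hasDerivAt_tailK (hm : 0 < m) (t : ℝ) : HasDerivAt (tailK k m) (-PsiK' k m t) t := by
  rw [funext (tailK_eq_cbetaK_sub_psiK (k := k) hm)]
  exact (intervalIntegral.integral_hasDerivAt_right ((continuous_psiK' k m).intervalIntegrable _ _)
    (continuous_psiK' k m).stronglyMeasurable.stronglyMeasurableAtFilter
    (continuous_psiK' k m).continuousAt).const_sub _

lemma hasDerivAt_psiK'_div_mul_pow {t : ℝ} (hm : 0 < m) (ht : 0 < t) :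
    HasDerivAt (fun t => PsiK' k m t / (m * t ^ k))
      (-PsiK' k m t * (1 + k / (m * t ^ (k + 1)))) t := by
  refine ((hasDerivAt_psiK' t).div ((hasDerivAt_pow k t).const_mul m)
    (by positivity)).congr_deriv ?_
  rcases k with _ | j
  · simp [field]
  · push_cast
    field_simp
    ring

lemma tendsto_psiK'_div_mul_pow_atTop (hm : 0 < m) :
    Tendsto (fun t => PsiK' k m t / (m * t ^ k)) atTop (𝓝 0) := by
  refine tendsto_of_tendsto_of_tendsto_of_le_of_le' tendsto_const_nhds
    (by simpa using (tendsto_psiK'_atTop (k := k) hm).div_const m) ?_ ?_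
  · filter_upwards [eventually_gt_atTop 0] with t ht
    exact div_nonneg (psiK'_pos k m t).le (by positivity)
  · filter_upwards [eventually_ge_atTop 1] with t ht
    exact div_le_div_of_nonneg_left (psiK'_pos k m t).le hm
      (le_mul_of_one_le_right hm.le (one_le_pow₀ ht))

lemma tendsto_tailRatioK_atTop (hm : 0 < m) : Tendsto (tailRatioK k m) atTop (𝓝 1) := by
  have hpow : Tendsto (fun t : ℝ => 1 + k / (m * t ^ (k + 1))) atTop (𝓝 1) := by
    simpa using tendsto_const_nhds.add <| tendsto_const_nhds.div_atTop
      ((tendsto_pow_atTop k.succ_ne_zero).const_mul_atTop hm)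
  have h := HasDerivAt.lhopital_zero_atTop (f := tailK k m)
    (.of_forall (hasDerivAt_tailK hm))
    ((eventually_gt_atTop 0).mono fun t ht => hasDerivAt_psiK'_div_mul_pow hm ht)
    ((eventually_gt_atTop 0).mono fun t ht => mul_ne_zero (neg_ne_zero.2 (psiK'_pos k m t).ne')
      (by positivity))
    (tendsto_tailK_atTop hm) (tendsto_psiK'_div_mul_pow_atTop hm)
    (hpow.inv₀ one_ne_zero |>.congr fun t => by
      rw [neg_mul, neg_div_neg_eq, div_mul_cancel_left₀ (psiK'_pos k m t).ne'])
  rw [inv_one] at h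
  exact h.congr fun t => by rw [tailRatioK, div_div_eq_mul_div]

lemma logTailRatioK_eq (hm : 0 < m) {t : ℝ} (ht : 0 < t) :
    logTailRatioK k m t = 1 + (log m + log (CbetaK k m) - log (tailRatioK k m t)) /
      (m / (k + 1) * t ^ (k + 1)) + k / (m / (k + 1)) * (log t / t ^ (k + 1)) := by
  have hlogR : log (tailRatioK k m t) =
      log (tailK k m t) + log m + k * log t + m / (k + 1) * t ^ (k + 1) := by
    rw [tailRatioK, log_div (mul_pos (tailK_pos hm t) (by positivity)).ne' (psiK'_pos k m t).ne',
      log_mul (tailK_pos hm t).ne' (by positivity), log_mul hm.ne' (by positivity), log_pow,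
      PsiK', log_exp]
    ring
  rw [logTailRatioK, log_div (tailK_pos hm t).ne' (cbetaK_pos hm).ne', hlogR]
  field_simp
  ring

lemma tendsto_logTailRatioK_atTop (hm : 0 < m) : Tendsto (logTailRatioK k m) atTop (𝓝 1) := by
  have hlogR : Tendsto (fun t => log (tailRatioK k m t)) atTop (𝓝 0) := by
    simpa [Function.comp_def] using
      (continuousAt_log one_ne_zero).tendsto.comp (tendsto_tailRatioK_atTop (k := k) hm)
  have hbounded := (tendsto_const_nhds (x := log m + log (CbetaK k m))).sub hlogR |>.div_atTop
    ((tendsto_pow_atTop k.succ_ne_zero).const_mul_atTop (by positivity : 0 < m / (k + 1)))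
  have hlog : Tendsto (fun t : ℝ => log t / t ^ (k + 1)) atTop (𝓝 0) :=
    ((isLittleO_log_rpow_atTop (by positivity : (0:ℝ) < k + 1)).congr_right
      fun t => by rw [← rpow_natCast]; push_cast; rfl).tendsto_div_nhds_zero
  have h := (tendsto_const_nhds (x := (1:ℝ))).add
    (hbounded.add (hlog.const_mul (k / (m / (k + 1)))))
  rw [mul_zero, add_zero, add_zero] at h
  refine h.congr' ?_
  filter_upwards [eventually_gt_atTop 0] with t ht
  rw [logTailRatioK_eq hm ht, add_assoc]

lemma tendsto_atTop_of_tendsto_tailK {α : Type*} {l : Filter α} {f : α → ℝ} (hm : 0 < m)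
    (h : Tendsto (fun x => tailK k m (f x)) l (𝓝 0)) : Tendsto f l atTop := by
  refine tendsto_atTop.2 fun M => ?_
  filter_upwards [h.eventually (gt_mem_nhds (tailK_pos hm M))] with x hx
  by_contra! hxM
  exact (antitone_tailK hm hxM.le).not_gt hx

lemma psiK'_mul_div_eq (hm : 0 < m) {t : ℝ} (ht : 0 < t) :
    PsiK' k m t * t / (tailK k m t / CbetaK k m * -log (tailK k m t / CbetaK k m)) =
      (k + 1) * CbetaK k m / (tailRatioK k m t * logTailRatioK k m t) := by
  rcases eq_or_ne (log (tailK k m t / CbetaK k m)) 0 with h | h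
  · simp [logTailRatioK, h]
  have := tailK_pos (k := k) hm t
  have := cbetaK_pos (k := k) hm
  have := psiK'_pos k m t
  rw [tailRatioK, logTailRatioK]
  field_simp
  ring

theorem stmt14_general (k : ℕ) (m : ℝ) (hm : 0 < m)
    (ts : ℝ → ℝ)
    (hts : ∀ s ∈ Set.Ioo (0:ℝ) 1, 0 ≤ ts s ∧ PsiK k m (ts s) = (1 - s) * CbetaK k m) :
    Tendsto (fun s : ℝ => PsiK' k m (ts s) * ts s / (s * (-Real.log s)))
      (𝓝[>] (0:ℝ)) (𝓝 (((k:ℝ) + 1) * CbetaK k m)) := by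
  have hIoo : Ioo (0:ℝ) 1 ∈ 𝓝[>] 0 := Ioo_mem_nhdsGT one_pos
  have htail : ∀ s ∈ Ioo (0:ℝ) 1, tailK k m (ts s) = s * CbetaK k m := fun s hs => by
    rw [tailK_eq_cbetaK_sub_psiK hm, (hts s hs).2]
    ring
  have hts_top : Tendsto ts (𝓝[>] 0) atTop := by
    refine tendsto_atTop_of_tendsto_tailK (k := k) hm ?_
    have h := ((continuous_mul_const (CbetaK k m)).tendsto' 0 0 (zero_mul _)).mono_left
      (nhdsWithin_le_nhds (s := Ioi 0))
    refine h.congr' ?_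
    filter_upwards [hIoo] with s hs
    exact (htail s hs).symm
  have hlim : Tendsto (fun t => (k + 1) * CbetaK k m / (tailRatioK k m t * logTailRatioK k m t))
      atTop (𝓝 ((k + 1) * CbetaK k m)) := by
    simpa [Pi.div_def] using tendsto_const_nhds.div ((tendsto_tailRatioK_atTop hm).mul
      (tendsto_logTailRatioK_atTop hm)) (by norm_num)
  refine (hlim.comp hts_top).congr' ?_
  filter_upwards [hIoo, hts_top.eventually (eventually_gt_atTop 0)] with s hs hpos
  rw [Function.comp_apply, ← psiK'_mul_div_eq hm hpos, htail s hs,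
    mul_div_cancel_right₀ _ (cbetaK_pos hm).ne']

theorem stmt14 (k : ℕ) (hk : 1 ≤ k) (m : ℝ) (hm : 0 < m)
    (ts : ℝ → ℝ)
    (hts : ∀ s ∈ Set.Ioo (0:ℝ) 1, 0 ≤ ts s ∧ PsiK k m (ts s) = (1 - s) * CbetaK k m) :
    Tendsto (fun s : ℝ => PsiK' k m (ts s) * ts s / (s * (-Real.log s)))
      (𝓝[>] (0:ℝ)) (𝓝 (((k:ℝ) + 1) * CbetaK k m)) :=
  stmt14_general k m hm ts hts
end

section
/- Fix an integer k ≥ 1 and m > 0, and let ψ(w) = ∫_0^w exp((m/(k+1)) t^{k+1}) dt for w ≥ 0, which is a strictly increasing bijection of [0, ∞) onto [0, ∞) with inverse ψ⁻¹. Then (ψ⁻¹(v))^{k+1} / ln v → (k+1)/m as v → +∞. -/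
open MeasureTheory Filter Set
open scoped Topology

/-- `ψ(w) = ∫₀ʷ exp((m/(k+1)) t^{k+1}) dt`, the change of variables in the model case
`β(s) = s^k`. -/
noncomputable def psiK (k : ℕ) (m : ℝ) (w : ℝ) : ℝ :=
  ∫ t in (0:ℝ)..w, Real.exp ((m / ((k:ℝ) + 1)) * t ^ (k + 1))

/-- The inverse `ψ⁻¹` of the (strictly increasing) map `ψ`. -/
noncomputable def psiKInv (k : ℕ) (m : ℝ) : ℝ → ℝ :=
  Function.invFun (psiK k m)

section Aux

variable (k : ℕ) (m : ℝ)

private lemma fk_cont :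
    Continuous (fun t : ℝ => Real.exp ((m / ((k:ℝ) + 1)) * t ^ (k + 1))) :=
  Real.continuous_exp.comp (continuous_const.mul (continuous_pow _))

private lemma fk_intgr (a b : ℝ) :
    IntervalIntegrable (fun t : ℝ => Real.exp ((m / ((k:ℝ) + 1)) * t ^ (k + 1)))
      volume a b :=
  (fk_cont k m).intervalIntegrable a b

private lemma psiK_sub (a b : ℝ) :
    psiK k m b - psiK k m a
      = ∫ t in a..b, Real.exp ((m / ((k:ℝ) + 1)) * t ^ (k + 1)) :=
  intervalIntegral.integral_interval_sub_left (fk_intgr k m 0 b) (fk_intgr k m 0 a)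

private lemma psiK_strictMono : StrictMono (psiK k m) := by
  intro a b hab
  have h := psiK_sub k m a b
  have hpos : 0 < ∫ t in a..b, Real.exp ((m / ((k:ℝ) + 1)) * t ^ (k + 1)) :=
    intervalIntegral.intervalIntegral_pos_of_pos (fk_intgr k m a b)
      (fun x => Real.exp_pos _) hab
  linarith

private lemma psiK_continuous : Continuous (psiK k m) :=
  intervalIntegral.continuous_primitive (fun a b => fk_intgr k m a b) 0

private lemma psiK_zero : psiK k m 0 = 0 :=
  intervalIntegral.integral_same

private lemma psiK_ge_self {w : ℝ} (hm : 0 < m) (hw : 0 ≤ w) : w ≤ psiK k m w := by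
  have h1 : (∫ t in (0:ℝ)..w, (1:ℝ))
      ≤ ∫ t in (0:ℝ)..w, Real.exp ((m / ((k:ℝ) + 1)) * t ^ (k + 1)) := by
    apply intervalIntegral.integral_mono_on hw (intervalIntegrable_const) (fk_intgr k m 0 w)
    intro t ht
    have ht0 : 0 ≤ t := ht.1
    have : (0:ℝ) ≤ (m / ((k:ℝ) + 1)) * t ^ (k + 1) := by positivity
    simpa using Real.one_le_exp this
  simpa [psiK] using h1

private lemma psiK_exists (hm : 0 < m) {v : ℝ} (hv : 0 ≤ v) :
    ∃ w, psiK k m w = v := by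
  have h0 : psiK k m 0 = 0 := psiK_zero k m
  have hge : v ≤ psiK k m v := psiK_ge_self k m hm hv
  have := intermediate_value_Icc hv ((psiK_continuous k m).continuousOn)
  have hmem : v ∈ Icc (psiK k m 0) (psiK k m v) := ⟨by rw [h0]; exact hv, hge⟩
  obtain ⟨w, _, hw⟩ := this hmem
  exact ⟨w, hw⟩

private lemma psiK_inv_eq (hm : 0 < m) {v : ℝ} (hv : 0 ≤ v) :
    psiK k m (psiKInv k m v) = v :=
  Function.invFun_eq (psiK_exists k m hm hv)

private lemma psiKInv_tendsto (hm : 0 < m) :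
    Tendsto (psiKInv k m) atTop atTop := by
  rw [tendsto_atTop]
  intro b
  set b' := max b 0 with hb'
  have hb'0 : (0:ℝ) ≤ b' := le_max_right _ _
  filter_upwards [eventually_ge_atTop (psiK k m b')] with v hv
  have hv0 : 0 ≤ v := le_trans (le_trans hb'0 (psiK_ge_self k m hm hb'0)) hv
  have heq := psiK_inv_eq k m hm hv0
  have : psiK k m b' ≤ psiK k m (psiKInv k m v) := by rw [heq]; exact hv
  have := (psiK_strictMono k m).le_iff_le.1 this
  exact le_trans (le_max_left b 0) this

end Aux

theorem stmt17 (k : ℕ) (hk : 1 ≤ k) (m : ℝ) (hm : 0 < m) :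
    Tendsto (fun v : ℝ => (psiKInv k m v) ^ (k + 1) / Real.log v)
      atTop (𝓝 (((k:ℝ) + 1) / m)) := by
  set c : ℝ := m / ((k:ℝ) + 1) with hc
  have hk1 : (0:ℝ) < (k:ℝ) + 1 := by positivity
  have hcpos : 0 < c := div_pos hm hk1
  have hck : c * ((k:ℝ) + 1) = m := div_mul_cancel₀ m (ne_of_gt hk1)
  -- FTC: ∫ t in a..b, m * t^k * exp (c * t^(k+1)) = exp (c*b^(k+1)) - exp (c*a^(k+1))
  have hderiv : ∀ x : ℝ, HasDerivAt (fun t : ℝ => Real.exp (c * t ^ (k + 1)))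
      (m * x ^ k * Real.exp (c * x ^ (k + 1))) x := by
    intro x
    have h1 : HasDerivAt (fun t : ℝ => c * t ^ (k + 1))
        (c * (((k:ℝ) + 1) * x ^ k)) x := by
      have := (hasDerivAt_pow (k + 1) x).const_mul c
      simpa [Nat.add_sub_cancel] using this
    have h2 := h1.exp
    convert h2 using 1
    rw [← hck]; ring
  have hftc : ∀ a b : ℝ, (∫ t in a..b, m * t ^ k * Real.exp (c * t ^ (k + 1)))
      = Real.exp (c * b ^ (k + 1)) - Real.exp (c * a ^ (k + 1)) := by
    intro a b
    apply intervalIntegral.integral_eq_sub_of_hasDerivAt (fun x _ => hderiv x)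
    exact (Continuous.intervalIntegrable (by continuity) a b)
  -- lower bound : exp (c * (w-1)^(k+1)) ≤ psiK k m w for w ≥ 1
  have hlow : ∀ w : ℝ, 1 ≤ w → Real.exp (c * (w - 1) ^ (k + 1)) ≤ psiK k m w := by
    intro w hw
    have hw0 : (0:ℝ) ≤ w - 1 := by linarith
    have hsplit : psiK k m w - psiK k m (w - 1)
        = ∫ t in (w-1)..w, Real.exp (c * t ^ (k + 1)) := psiK_sub k m (w - 1) w
    have hpsiw1 : 0 ≤ psiK k m (w - 1) := by
      have := (psiK_strictMono k m).monotone hw0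
      rwa [psiK_zero k m] at this
    have hmono : (∫ t in (w-1)..w, Real.exp (c * (w - 1) ^ (k + 1)))
        ≤ ∫ t in (w-1)..w, Real.exp (c * t ^ (k + 1)) := by
      apply intervalIntegral.integral_mono_on (by linarith) intervalIntegrable_const
        (fk_intgr k m (w-1) w)
      intro t ht
      apply Real.exp_le_exp.2
      apply mul_le_mul_of_nonneg_left _ (le_of_lt hcpos)
      exact pow_le_pow_left₀ hw0 ht.1 _
    rw [intervalIntegral.integral_const] at hmono
    have : Real.exp (c * (w - 1) ^ (k + 1))
        ≤ ∫ t in (w-1)..w, Real.exp (c * t ^ (k + 1)) := by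
      simpa using hmono
    linarith
  have hpsipos : ∀ w : ℝ, 1 ≤ w → 0 < psiK k m w := fun w hw =>
    lt_of_lt_of_le (Real.exp_pos _) (hlow w hw)
  -- upper bound : psiK k m w ≤ A * exp (c * w^(k+1)) for w ≥ 1
  set A : ℝ := psiK k m 1 + 1 / m with hA
  have hpsi1 : 0 < psiK k m 1 := hpsipos 1 le_rfl
  have hApos : 0 < A := by positivity
  have hup : ∀ w : ℝ, 1 ≤ w → psiK k m w ≤ A * Real.exp (c * w ^ (k + 1)) := by
    intro w hw
    have hsplit : psiK k m w - psiK k m 1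
        = ∫ t in (1:ℝ)..w, Real.exp (c * t ^ (k + 1)) := psiK_sub k m 1 w
    have hmono : (∫ t in (1:ℝ)..w, Real.exp (c * t ^ (k + 1)))
        ≤ ∫ t in (1:ℝ)..w, t ^ k * Real.exp (c * t ^ (k + 1)) := by
      apply intervalIntegral.integral_mono_on hw (fk_intgr k m 1 w)
        (Continuous.intervalIntegrable (by continuity) 1 w)
      intro t ht
      have ht1 : (1:ℝ) ≤ t := ht.1
      nth_rewrite 1 [← one_mul (Real.exp (c * t ^ (k + 1)))]
      exact mul_le_mul_of_nonneg_right (one_le_pow₀ ht1) (Real.exp_pos _).le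
    have h2 : (∫ t in (1:ℝ)..w, m * (t ^ k * Real.exp (c * t ^ (k + 1))))
        = m * ∫ t in (1:ℝ)..w, t ^ k * Real.exp (c * t ^ (k + 1)) :=
      intervalIntegral.integral_const_mul _ _
    have h1 := hftc 1 w
    simp only [mul_assoc] at h1
    have hval : (∫ t in (1:ℝ)..w, t ^ k * Real.exp (c * t ^ (k + 1)))
        = (Real.exp (c * w ^ (k + 1)) - Real.exp (c * 1 ^ (k + 1))) / m := by
      rw [eq_div_iff (ne_of_gt hm), mul_comm, ← h2, h1]
    have hle : psiK k m w ≤ psiK k m 1 + Real.exp (c * w ^ (k + 1)) / m := by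
      have h3 : (Real.exp (c * w ^ (k + 1)) - Real.exp (c * 1 ^ (k + 1))) / m
          ≤ Real.exp (c * w ^ (k + 1)) / m := by
        gcongr
        linarith [Real.exp_pos (c * (1:ℝ) ^ (k + 1))]
      rw [hval] at hmono
      linarith [hsplit]
    have hexp1 : (1:ℝ) ≤ Real.exp (c * w ^ (k + 1)) := by
      apply Real.one_le_exp; positivity
    have hh1 : psiK k m 1 ≤ psiK k m 1 * Real.exp (c * w ^ (k + 1)) := by
      nth_rewrite 1 [← mul_one (psiK k m 1)]
      exact mul_le_mul_of_nonneg_left hexp1 hpsi1.le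
    have hAe : A * Real.exp (c * w ^ (k + 1))
        = psiK k m 1 * Real.exp (c * w ^ (k + 1))
          + (1 / m) * Real.exp (c * w ^ (k + 1)) := by rw [hA]; ring
    have hh2 : Real.exp (c * w ^ (k + 1)) / m
        = (1 / m) * Real.exp (c * w ^ (k + 1)) := by ring
    rw [hAe]
    linarith [hle, hh1, hh2.le, hh2.ge]
  -- squeeze : log (psiK w) / w^(k+1) → c
  have hlogup : ∀ w : ℝ, 1 ≤ w →
      Real.log (psiK k m w) ≤ Real.log A + c * w ^ (k + 1) := by
    intro w hw
    calc Real.log (psiK k m w) ≤ Real.log (A * Real.exp (c * w ^ (k + 1))) :=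
          Real.log_le_log (hpsipos w hw) (hup w hw)
      _ = Real.log A + c * w ^ (k + 1) := by
          rw [Real.log_mul (ne_of_gt hApos) (Real.exp_ne_zero _), Real.log_exp]
  have hloglow : ∀ w : ℝ, 1 ≤ w →
      c * (w - 1) ^ (k + 1) ≤ Real.log (psiK k m w) := by
    intro w hw
    exact (Real.le_log_iff_exp_le (hpsipos w hw)).2 (hlow w hw)
  have hratio : Tendsto (fun w : ℝ => Real.log (psiK k m w) / w ^ (k + 1))
      atTop (𝓝 c) := by
    have hlowlim : Tendsto (fun w : ℝ => c * (1 - w⁻¹) ^ (k + 1)) atTop (𝓝 c) := by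
      have h1 : Tendsto (fun w : ℝ => 1 - w⁻¹) atTop (𝓝 1) := by
        have := tendsto_inv_atTop_zero (𝕜 := ℝ)
        simpa using tendsto_const_nhds.sub this
      have h2 := (h1.pow (k + 1)).const_mul c
      simpa using h2
    have huplim : Tendsto (fun w : ℝ => c + Real.log A / w ^ (k + 1)) atTop (𝓝 c) := by
      have h1 : Tendsto (fun w : ℝ => w ^ (k + 1)) atTop atTop :=
        tendsto_pow_atTop (Nat.succ_ne_zero k)
      have h2 := h1.inv_tendsto_atTop.const_mul (Real.log A)
      have h3 : Tendsto (fun w : ℝ => Real.log A / w ^ (k + 1)) atTop (𝓝 0) := by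
        simpa [div_eq_mul_inv] using h2
      simpa using tendsto_const_nhds.add h3
    apply tendsto_of_tendsto_of_tendsto_of_le_of_le' hlowlim huplim
    · filter_upwards [eventually_ge_atTop (1:ℝ)] with w hw
      have hwpos : (0:ℝ) < w := by linarith
      have hwp : (0:ℝ) < w ^ (k + 1) := by positivity
      have heq : c * (1 - w⁻¹) ^ (k + 1) = c * (w - 1) ^ (k + 1) / w ^ (k + 1) := by
        rw [show (1 - w⁻¹) = (w - 1) / w by field_simp, div_pow]; ring
      rw [heq]
      gcongr
      exact hloglow w hw
    · filter_upwards [eventually_ge_atTop (1:ℝ)] with w hw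
      have hwpos : (0:ℝ) < w := by linarith
      have hwp : (0:ℝ) < w ^ (k + 1) := by positivity
      have heq : c + Real.log A / w ^ (k + 1)
          = (Real.log A + c * w ^ (k + 1)) / w ^ (k + 1) := by
        field_simp; ring
      rw [heq]
      gcongr
      exact hlogup w hw
  -- invert and compose
  have hcne : c ≠ 0 := ne_of_gt hcpos
  have hinv : Tendsto (fun w : ℝ => w ^ (k + 1) / Real.log (psiK k m w))
      atTop (𝓝 c⁻¹) := by
    have := hratio.inv₀ hcne
    simpa [inv_div] using this
  have hcomp : Tendsto (fun v : ℝ =>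
      (psiKInv k m v) ^ (k + 1) / Real.log (psiK k m (psiKInv k m v)))
      atTop (𝓝 c⁻¹) := hinv.comp (psiKInv_tendsto k m hm)
  have hfinal : Tendsto (fun v : ℝ => (psiKInv k m v) ^ (k + 1) / Real.log v)
      atTop (𝓝 c⁻¹) := by
    apply hcomp.congr'
    filter_upwards [eventually_ge_atTop (0:ℝ)] with v hv
    rw [psiK_inv_eq k m hm hv]
  have : c⁻¹ = ((k:ℝ) + 1) / m := by rw [hc, inv_div]
  rwa [this] at hfinal
end
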